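/- arXiv:2107.05128 — 2 statements merged into one kernel-verified Lean document; each statement's English description precedes it below -/
import Mathlib

section
/- For any n ≥ 1 and any α ∈ {0,u,1}^n, the string αβ' ∈ {0,u,1}^{n+2^n}, where β' ∈ {0,u}^{2^n} has 0s exactly at positions indexed by resolutions of α and u elsewhere, is the unique prime implicate of MUX_n whose selector part equals α. -/
/-- Ternary values: `none` is the unstable value `u`. -/
abbrev TVal := Option Bool

/-- `a` is a resolution of `α`: it agrees with `α` on all stable coordinates. -/
def isRes {ι : Type*} (α : ι → TVal) (a : ι → Bool) : Prop :=
  ∀ i b, α i = some b → a i = b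

/-- The hazard-free extension of a Boolean function. -/
noncomputable def hfe {ι : Type*} (f : (ι → Bool) → Bool) (α : ι → TVal) : TVal := by
  classical
  exact if ∀ a, isRes α a → f a = true then some true
    else if ∀ a, isRes α a → f a = false then some false
    else none

/-- `β` is below `α` in the instability partial order (coordinatewise `u ≤ 0`, `u ≤ 1`). -/
def below {ι : Type*} (β α : ι → TVal) : Prop := ∀ i, β i = none ∨ β i = α i

/-- A prime implicant: an implicant minimal in the instability order. -/
def primeImplicant {ι : Type*} (f : (ι → Bool) → Bool) (α : ι → TVal) : Prop :=
  hfe f α = some true ∧ ∀ β, below β α → hfe f β = some true → β = α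

/-- A prime implicate: an implicate minimal in the instability order. -/
def primeImplicate {ι : Type*} (f : (ι → Bool) → Bool) (α : ι → TVal) : Prop :=
  hfe f α = some false ∧ ∀ β, below β α → hfe f β = some false → β = α

/-- The multiplexer function: data bits are indexed directly by selector strings. -/
def MUX (n : ℕ) (v : (Fin n ⊕ (Fin n → Bool)) → Bool) : Bool :=
  v (Sum.inr fun i => v (Sum.inl i))

/-- The extension of a selector string `α` by `1`s on the resolutions of `α`
and `u`s elsewhere. -/
noncomputable def muxPI (n : ℕ) (α : Fin n → TVal) : (Fin n ⊕ (Fin n → Bool)) → TVal := by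
  classical
  exact Sum.elim α fun a => if isRes α a then some true else none

/-- The extension of a selector string `α` by `0`s on the resolutions of `α`
and `u`s elsewhere. -/
noncomputable def muxPIm (n : ℕ) (α : Fin n → TVal) : (Fin n ⊕ (Fin n → Bool)) → TVal := by
  classical
  exact Sum.elim α fun a => if isRes α a then some false else none


/-!
A ternary string `β` is an implicate of `MUX n` exactly when `β` assigns `0` to every data
position addressed by a resolution of its own selector part. Hence every implicate `γ` lies
above `muxPIm n (γ ∘ Sum.inl)`, which makes `muxPIm n α` the least implicate with selector
part `α`. Conversely, no implicate below `muxPIm n α` can destabilise a selector bit: flipping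
that bit gives a resolution addressing a data position where `muxPIm n α` is `u`.
-/

section Instability

variable {ι : Type*}

lemma below_trans {α β γ : ι → TVal} (hαβ : below α β) (hβγ : below β γ) : below α γ := by
  intro i
  rcases hαβ i with h | h
  · exact .inl h
  · rcases hβγ i with h' | h' <;> simp only [h, h', true_or, or_true]

lemma below_antisymm {α β : ι → TVal} (hαβ : below α β) (hβα : below β α) : α = β := by
  funext i
  rcases hαβ i with h | h
  · rcases hβα i with h' | h' <;> simp only [h, h']
  · exact h

lemma isRes_getD (α : ι → TVal) (d : Bool) : isRes α fun i => (α i).getD d := by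
  intro i b h
  simp [h]

lemma hfe_eq_some_false_iff (f : (ι → Bool) → Bool) (α : ι → TVal) :
    hfe f α = some false ↔ ∀ a, isRes α a → f a = false := by
  classical
  unfold hfe
  split_ifs with htrue hfalse
  · have hres := isRes_getD α false
    exact iff_of_false (by simp) fun h => by simpa [htrue _ hres] using h _ hres
  · exact iff_of_true rfl hfalse
  · exact iff_of_false (by simp) hfalse

lemma eq_of_below_of_isRes_imp {α β : ι → TVal} (hβα : below β α)
    (hres : ∀ a, isRes β a → isRes α a) : β = α := by
  classical
  funext i
  rcases hβα i with hβ | hβ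
  · cases hα : α i with
    | none => rw [hβ]
    | some b =>
      have hflip : isRes β (Function.update (fun j => (β j).getD b) i !b) := by
        intro j c hj
        have hji : j ≠ i := by rintro rfl; simp [hβ] at hj
        simp [Function.update_of_ne hji, hj]
      simpa using hres _ hflip i b hα
  · exact hβ

end Instability

section Multiplexer

variable {n : ℕ}

@[simp]
lemma muxPIm_comp_inl (α : Fin n → TVal) : muxPIm n α ∘ Sum.inl = α := rfl

lemma muxPIm_inr_of_isRes {α : Fin n → TVal} {s : Fin n → Bool} (hs : isRes α s) :
    muxPIm n α (Sum.inr s) = some false := by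
  simp [muxPIm, hs]

lemma muxPIm_inr_of_not_isRes {α : Fin n → TVal} {s : Fin n → Bool} (hs : ¬isRes α s) :
    muxPIm n α (Sum.inr s) = none := by
  simp [muxPIm, hs]

lemma hfe_MUX_eq_some_false_iff (β : (Fin n ⊕ (Fin n → Bool)) → TVal) :
    hfe (MUX n) β = some false ↔
      ∀ s, isRes (β ∘ Sum.inl) s → β (Sum.inr s) = some false := by
  rw [hfe_eq_some_false_iff]
  constructor
  · intro himp s hs
    -- the resolution reading `s` on the selectors and `1` at every unstable data position
    have hv : isRes β (Sum.elim s fun x => (β (Sum.inr x)).getD true) := by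
      rintro (i | x) b hb
      · exact hs i b hb
      · simp [hb]
    have hmux := himp _ hv
    simp only [MUX, Sum.elim_inl, Sum.elim_inr] at hmux
    cases h : β (Sum.inr s) <;> simp_all
  · intro hdata v hv
    exact hv _ false (hdata _ fun i b hb => hv (Sum.inl i) b hb)

lemma hfe_muxPIm (α : Fin n → TVal) : hfe (MUX n) (muxPIm n α) = some false := by
  rw [hfe_MUX_eq_some_false_iff, muxPIm_comp_inl]
  exact fun s => muxPIm_inr_of_isRes

lemma muxPIm_below_of_hfe_eq_some_false {γ : (Fin n ⊕ (Fin n → Bool)) → TVal}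
    (hγ : hfe (MUX n) γ = some false) : below (muxPIm n (γ ∘ Sum.inl)) γ := by
  rintro (i | s)
  · exact .inr rfl
  · by_cases hs : isRes (γ ∘ Sum.inl) s
    · rw [muxPIm_inr_of_isRes hs]
      exact .inr ((hfe_MUX_eq_some_false_iff γ).mp hγ s hs).symm
    · exact .inl (muxPIm_inr_of_not_isRes hs)

lemma eq_of_muxPIm_below_muxPIm {α β : Fin n → TVal}
    (h : below (muxPIm n β) (muxPIm n α)) : β = α := by
  refine eq_of_below_of_isRes_imp (fun i => h (Sum.inl i)) fun s hs => ?_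
  by_contra hα
  simpa [muxPIm_inr_of_isRes hs, muxPIm_inr_of_not_isRes hα] using h (Sum.inr s)

end Multiplexer

theorem stmt3_general (n : ℕ) (α : Fin n → TVal) :
    primeImplicate (MUX n) (muxPIm n α) ∧
    ∀ γ, primeImplicate (MUX n) γ → (∀ i, γ (Sum.inl i) = α i) → γ = muxPIm n α := by
  refine ⟨⟨hfe_muxPIm α, fun β hβα hβ => ?_⟩, fun γ hγ hsel => ?_⟩
  · have hsel : β ∘ Sum.inl = α :=
      eq_of_muxPIm_below_muxPIm (below_trans (muxPIm_below_of_hfe_eq_some_false hβ) hβα)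
    exact below_antisymm hβα (hsel ▸ muxPIm_below_of_hfe_eq_some_false hβ)
  · have hsel : γ ∘ Sum.inl = α := funext hsel
    exact (hγ.2 _ (hsel ▸ muxPIm_below_of_hfe_eq_some_false hγ.1) (hfe_muxPIm α)).symm

theorem stmt3 (n : ℕ) (hn : 1 ≤ n) (α : Fin n → TVal) :
    primeImplicate (MUX n) (muxPIm n α) ∧
    ∀ γ, primeImplicate (MUX n) γ → (∀ i, γ (Sum.inl i) = α i) → γ = muxPIm n α :=
  stmt3_general n α
end

section
/- If α, β ∈ {0,u,1}^n have a common resolution, α' ∈ {u,1}^{2^n} has 1s exactly at positions indexed by resolutions of α, and β' ∈ {0,u}^{2^n} has 0s exactly at positions indexed by resolutions of β, then every coordinate i of αα' and ββ' at which both strings are stable and disagree lies among the data positions (i.e., i > n); conversely if α and β have no common resolution, then every such coordinate lies among the selector positions (i ≤ n). -/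
theorem eq_of_isRes {ι : Type*} {α β : ι → TVal} {a : ι → Bool} (hα : isRes α a)
    (hβ : isRes β a) {i : ι} {b c : Bool} (hb : α i = some b) (hc : β i = some c) : b = c :=
  (hα i b hb).symm.trans (hβ i c hc)

@[simp]
theorem muxPI_inl (n : ℕ) (α : Fin n → TVal) (i : Fin n) : muxPI n α (Sum.inl i) = α i := rfl

@[simp]
theorem muxPIm_inl (n : ℕ) (α : Fin n → TVal) (i : Fin n) : muxPIm n α (Sum.inl i) = α i := rfl

theorem muxPI_inr_eq_some {n : ℕ} {α : Fin n → TVal} {a : Fin n → Bool} {b : Bool} :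
    muxPI n α (Sum.inr a) = some b ↔ isRes α a ∧ b = true := by
  simp only [muxPI, Sum.elim_inr]
  split_ifs <;> simp_all [eq_comm]

theorem muxPIm_inr_eq_some {n : ℕ} {α : Fin n → TVal} {a : Fin n → Bool} {b : Bool} :
    muxPIm n α (Sum.inr a) = some b ↔ isRes α a ∧ b = false := by
  simp only [muxPIm, Sum.elim_inr]
  split_ifs <;> simp_all [eq_comm]

theorem stmt8 (n : ℕ) (α β : Fin n → TVal) :
    ((∃ a, isRes α a ∧ isRes β a) →
      ∀ i b c, muxPI n α i = some b → muxPIm n β i = some c → b ≠ c →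
        ∃ j, i = Sum.inr j) ∧
    ((¬ ∃ a, isRes α a ∧ isRes β a) →
      ∀ i b c, muxPI n α i = some b → muxPIm n β i = some c → b ≠ c →
        ∃ j, i = Sum.inl j) := by
  constructor
  · rintro ⟨a, hα, hβ⟩ (j | j) b c hb hc hbc
    · rw [muxPI_inl] at hb
      rw [muxPIm_inl] at hc
      exact absurd (eq_of_isRes hα hβ hb hc) hbc
    · exact ⟨j, rfl⟩
  · rintro hdisjoint (j | a) b c hb hc -
    · exact ⟨j, rfl⟩
    · exact absurd ⟨a, (muxPI_inr_eq_some.mp hb).1, (muxPIm_inr_eq_some.mp hc).1⟩ hdisjoint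
end
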